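/- Let T > 0, let A, B, C, D, f, g, Q, R, Γ, η : ℝ → ℝ be continuous on [0,T], let H, Γ₀, η₀ ∈ ℝ, and fix ε > 0, M ≥ 0, c₀ ≥ 0. Suppose P, K, φ : ℝ → ℝ are differentiable on [0,T] with |P|, |K|, |φ| ≤ M, |α| ≥ ε on [0,T], φ(T) = −H·η₀, where α := R + PD², β := BP + PCD, δ := Bφ + PgD, and φ'(t) + f(t)P(t) + f(t)K(t) + A(t)φ(t) + C(t)P(t)g(t) − K(t)B(t)α(t)⁻¹δ(t) − β(t)α(t)⁻¹δ(t) − Q(t)η(t) = 0 on [0,T]. Then there exists c ≥ 0 such that for every natural number N ≥ 1 and all differentiable P_N, K_N, φ_N : ℝ → ℝ on [0,T] with |P_N|, |K_N|, |φ_N| ≤ M, |α_N| ≥ ε on [0,T] (where α_N := R + (P_N + K_N/N)D², β_N := BP_N + (P_N + K_N/N)CD, δ_N := Bφ_N + (P_N + K_N/N)gD), φ_N(T) = −H(1 − Γ₀/N)η₀, sup_{[0,T]}|P_N − P| ≤ c₀/N, sup_{[0,T]}|K_N − K| ≤ c₀/N, and φ_N'(t) + f(t)P_N(t) + f(t)K_N(t)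 + A(t)φ_N(t) − P_N(t)B(t)α_N(t)⁻¹δ_N(t) − K_N(t)B(t)α_N(t)⁻¹δ_N(t) + C(t)(P_N(t) + K_N(t)/N)(g(t) − D(t)α_N(t)⁻¹δ_N(t)) − (1 − Γ(t)/N)Q(t)η(t) = 0 on [0,T], one has sup_{t∈[0,T]} |φ_N(t) − φ(t)| ≤ c/N. -/

import Mathlib

/-!
The two offset equations share one drift `F(p, k, ν, x)`, a rational expression in its
arguments and in the coefficients: `φ_N` solves `φ_N' = -F(P_N, K_N, 1/N, φ_N)` and `φ` solves
`φ' = -F(P, K, 0, φ)`. Along the data allowed by the hypotheses all arguments stay bounded and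
the denominator `R + (p + kν) D²` stays away from zero, so `F` is Lipschitz there, uniformly in
`t` and `N`. Since `P_N - P`, `K_N - K` and `ν` are `O(1/N)`, this gives
`|F_N - F| ≤ L (|φ_N - φ| + 1/N)`. The terminal values differ by `|H Γ₀ η₀| / N`, so Grönwall's
inequality, run backward from `T`, bounds `|φ_N - φ|` by `c / N`.

The Lipschitz bound is obtained by structural recursion on `F`: "`v` is a bounded `O(ρ)`
perturbation of `u`" is stable under sums, products and inversion away from zero.
-/

open Set Filter Asymptotics

structure IsBoundedPerturbation {ι R : Type*} [Norm R] [Sub R] (l : Filter ι) (ρ : ι → ℝ)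
    (u v : ι → R) : Prop where
  isBigO_left : u =O[l] fun _ => (1 : ℝ)
  isBigO_right : v =O[l] fun _ => (1 : ℝ)
  sub_isBigO : (fun i => v i - u i) =O[l] ρ

namespace IsBoundedPerturbation

variable {ι : Type*} {l : Filter ι} {ρ : ι → ℝ}

theorem of_isBigO_one {R : Type*} [SeminormedAddCommGroup R] {u : ι → R}
    (hu : u =O[l] fun _ => (1 : ℝ)) : IsBoundedPerturbation l ρ u u :=
  ⟨hu, hu, (isBigO_zero ρ l).congr_left fun i => (sub_self (u i)).symm⟩

section AddGroup

variable {R : Type*} [SeminormedAddCommGroup R] {u₁ u₂ v₁ v₂ : ι → R}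

theorem add (h₁ : IsBoundedPerturbation l ρ u₁ v₁) (h₂ : IsBoundedPerturbation l ρ u₂ v₂) :
    IsBoundedPerturbation l ρ (fun i => u₁ i + u₂ i) (fun i => v₁ i + v₂ i) :=
  ⟨h₁.isBigO_left.add h₂.isBigO_left, h₁.isBigO_right.add h₂.isBigO_right,
    (h₁.sub_isBigO.add h₂.sub_isBigO).congr_left fun i => by abel⟩

theorem sub (h₁ : IsBoundedPerturbation l ρ u₁ v₁) (h₂ : IsBoundedPerturbation l ρ u₂ v₂) :
    IsBoundedPerturbation l ρ (fun i => u₁ i - u₂ i) (fun i => v₁ i - v₂ i) :=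
  ⟨h₁.isBigO_left.sub h₂.isBigO_left, h₁.isBigO_right.sub h₂.isBigO_right,
    (h₁.sub_isBigO.sub h₂.sub_isBigO).congr_left fun i => by abel⟩

end AddGroup

section Ring

variable {R : Type*} [SeminormedRing R] {u u₁ u₂ v v₁ v₂ : ι → R}

theorem mul (h₁ : IsBoundedPerturbation l ρ u₁ v₁) (h₂ : IsBoundedPerturbation l ρ u₂ v₂) :
    IsBoundedPerturbation l ρ (fun i => u₁ i * u₂ i) (fun i => v₁ i * v₂ i) := by
  refine ⟨by simpa using h₁.isBigO_left.mul h₂.isBigO_left,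
    by simpa using h₁.isBigO_right.mul h₂.isBigO_right, ?_⟩
  have h₁₂ : (fun i => (v₁ i - u₁ i) * v₂ i) =O[l] ρ := by
    simpa using h₁.sub_isBigO.mul h₂.isBigO_right
  have h₂₁ : (fun i => u₁ i * (v₂ i - u₂ i)) =O[l] ρ := by
    simpa using h₁.isBigO_left.mul h₂.sub_isBigO
  exact (h₁₂.add h₂₁).congr_left fun i => by noncomm_ring

theorem pow (h : IsBoundedPerturbation l ρ u v) (n : ℕ) :
    IsBoundedPerturbation l ρ (fun i => u i ^ n) (fun i => v i ^ n) := by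
  induction n with
  | zero => simpa using of_isBigO_one (isBigO_const_const (1 : R) one_ne_zero l)
  | succ n ih => simpa only [pow_succ] using ih.mul h

end Ring

theorem inv {𝕜 : Type*} [NormedDivisionRing 𝕜] {u v : ι → 𝕜} (h : IsBoundedPerturbation l ρ u v)
    (hu : (fun _ => (1 : ℝ)) =O[l] u) (hv : (fun _ => (1 : ℝ)) =O[l] v) :
    IsBoundedPerturbation l ρ (fun i => (u i)⁻¹) (fun i => (v i)⁻¹) := by
  have hu' := hu.inv_rev (by simp)
  have hv' := hv.inv_rev (by simp)
  simp only [inv_one] at hu' hv'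
  refine ⟨hu', hv', ?_⟩
  have h' : (fun i => (v i)⁻¹ * (v i - u i) * (u i)⁻¹) =O[l] ρ := by
    simpa using (hv'.mul h.sub_isBigO).mul hu'
  refine h'.neg_left.congr' ?_ EventuallyEq.rfl
  filter_upwards [hu.eq_zero_imp, hv.eq_zero_imp] with i hui hvi
  rw [inv_sub_inv' (fun h0 => one_ne_zero (hvi h0)) (fun h0 => one_ne_zero (hui h0))]
  noncomm_ring

theorem of_norm_le {S : Set ι} {R : Type*} [SeminormedAddCommGroup R] {u v : ι → R}
    {U V C : ℝ} (hu : ∀ i ∈ S, ‖u i‖ ≤ U) (hv : ∀ i ∈ S, ‖v i‖ ≤ V)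
    (huv : ∀ i ∈ S, ‖v i - u i‖ ≤ C * ‖ρ i‖) : IsBoundedPerturbation (𝓟 S) ρ u v :=
  ⟨isBigO_principal.2 ⟨U, by simpa using hu⟩, isBigO_principal.2 ⟨V, by simpa using hv⟩,
    isBigO_principal.2 ⟨C, huv⟩⟩

end IsBoundedPerturbation

section

variable {ι : Type*} {S : Set ι} {ρ : ι → ℝ}

theorem ContinuousOn.isBoundedPerturbation_comp {X E : Type*} [TopologicalSpace X]
    [SeminormedAddCommGroup E] {F : X → E} {s : Set X} (hF : ContinuousOn F s) (hs : IsCompact s)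
    {τ : ι → X} (hτ : MapsTo τ S s) :
    IsBoundedPerturbation (𝓟 S) ρ (fun i => F (τ i)) (fun i => F (τ i)) := by
  obtain ⟨C, hC⟩ := hs.exists_bound_of_continuousOn hF
  exact .of_isBigO_one (isBigO_principal.2 ⟨C, by simpa using fun i hi => hC _ (hτ hi)⟩)

theorem one_isBigO_principal_of_le {R : Type*} [SeminormedAddCommGroup R] {u : ι → R} {ε : ℝ}
    (hε : 0 < ε) (hu : ∀ i ∈ S, ε ≤ ‖u i‖) : (fun _ => (1 : ℝ)) =O[𝓟 S] u :=
  isBigO_principal.2 ⟨ε⁻¹, fun i hi => by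
    rw [norm_one, ← div_eq_inv_mul, le_div_iff₀ hε, one_mul]
    exact hu i hi⟩

end

theorem gronwallBound_div (δ K ε x c : ℝ) :
    gronwallBound (δ / c) K (ε / c) x = gronwallBound δ K ε x / c := by
  unfold gronwallBound
  split_ifs <;> ring

theorem norm_le_gronwallBound_backward {E : Type*} [NormedAddCommGroup E] [NormedSpace ℝ E]
    {f f' : ℝ → E} {δ K ε a b : ℝ} (hf : ∀ t ∈ Icc a b, HasDerivAt f (f' t) t)
    (hb : ‖f b‖ ≤ δ) (bound : ∀ t ∈ Icc a b, ‖f' t‖ ≤ K * ‖f t‖ + ε) :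
    ∀ t ∈ Icc a b, ‖f t‖ ≤ gronwallBound δ K ε (b - t) := by
  have hmem : ∀ s ∈ Icc a b, a + b - s ∈ Icc a b := fun s hs =>
    ⟨by linarith [hs.2], by linarith [hs.1]⟩
  have hrev : ∀ s ∈ Icc a b, HasDerivAt (fun s => f (a + b - s)) (-f' (a + b - s)) s :=
    fun s hs => (hf _ (hmem s hs)).comp_const_sub (a + b) s
  intro t ht
  have := norm_le_gronwallBound_of_norm_deriv_right_le
    (fun s hs => (hrev s hs).continuousAt.continuousWithinAt)
    (fun s hs => (hrev s (Ico_subset_Icc_self hs)).hasDerivWithinAt) (by simpa using hb)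
    (fun s hs => by simpa using bound _ (hmem s (Ico_subset_Icc_self hs))) _ (hmem t ht)
  simpa [show a + b - t - a = b - t by ring] using this

-- The drift `F(p, k, ν, x)`; the limiting equation takes this form at `ν = 0` only after
-- expanding `β = BP + PCD`.
noncomputable def offsetDrift (a b c d f g q r γ e p k ν x : ℝ) : ℝ :=
  f * p + f * k + a * x
    - (p + k) * b * (r + (p + k * ν) * d ^ 2)⁻¹ * (b * x + (p + k * ν) * g * d)
    + c * (p + k * ν) * (g - d * (r + (p + k * ν) * d ^ 2)⁻¹ * (b * x + (p + k * ν) * g * d))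
    - (1 - γ * ν) * q * e

theorem IsBoundedPerturbation.offsetDrift {ι : Type*} {l : Filter ι} {ρ : ι → ℝ}
    {a b c d f g q r γ e p k ν x a' b' c' d' f' g' q' r' γ' e' p' k' ν' x' : ι → ℝ}
    (ha : IsBoundedPerturbation l ρ a a') (hb : IsBoundedPerturbation l ρ b b')
    (hc : IsBoundedPerturbation l ρ c c') (hd : IsBoundedPerturbation l ρ d d')
    (hf : IsBoundedPerturbation l ρ f f') (hg : IsBoundedPerturbation l ρ g g')
    (hq : IsBoundedPerturbation l ρ q q') (hr : IsBoundedPerturbation l ρ r r')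
    (hγ : IsBoundedPerturbation l ρ γ γ') (he : IsBoundedPerturbation l ρ e e')
    (hp : IsBoundedPerturbation l ρ p p') (hk : IsBoundedPerturbation l ρ k k')
    (hν : IsBoundedPerturbation l ρ ν ν') (hx : IsBoundedPerturbation l ρ x x')
    (hα : (fun _ => (1 : ℝ)) =O[l] fun i => r i + (p i + k i * ν i) * d i ^ 2)
    (hα' : (fun _ => (1 : ℝ)) =O[l] fun i => r' i + (p' i + k' i * ν' i) * d' i ^ 2) :
    IsBoundedPerturbation l ρ
      (fun i => offsetDrift (a i) (b i) (c i) (d i) (f i) (g i) (q i) (r i) (γ i) (e i)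
        (p i) (k i) (ν i) (x i))
      (fun i => offsetDrift (a' i) (b' i) (c' i) (d' i) (f' i) (g' i) (q' i) (r' i) (γ' i)
        (e' i) (p' i) (k' i) (ν' i) (x' i)) := by
  have hπ := hp.add (hk.mul hν)
  have hαinv := (hr.add (hπ.mul (hd.pow 2))).inv hα hα'
  have hδ := (hb.mul hx).add ((hπ.mul hg).mul hd)
  have hone : IsBoundedPerturbation l ρ (fun _ => (1 : ℝ)) (fun _ => 1) :=
    .of_isBigO_one (isBigO_refl _ _)
  exact ((((hf.mul hp).add (hf.mul hk)).add (ha.mul hx)).sub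
    ((((hp.add hk).mul hb).mul hαinv).mul hδ)).add
    ((hc.mul hπ).mul (hg.sub ((hd.mul hαinv).mul hδ))) |>.sub
    (((hone.sub (hγ.mul hν)).mul hq).mul he)

theorem exists_abs_offsetDrift_sub_le {T ε M c₀ : ℝ} {A B C D f g Q R Γ η P K φ : ℝ → ℝ}
    (hA : ContinuousOn A (Icc 0 T)) (hB : ContinuousOn B (Icc 0 T))
    (hC : ContinuousOn C (Icc 0 T)) (hD : ContinuousOn D (Icc 0 T))
    (hf : ContinuousOn f (Icc 0 T)) (hg : ContinuousOn g (Icc 0 T))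
    (hQ : ContinuousOn Q (Icc 0 T)) (hR : ContinuousOn R (Icc 0 T))
    (hΓ : ContinuousOn Γ (Icc 0 T)) (hη : ContinuousOn η (Icc 0 T))
    (hε : 0 < ε) (hc₀ : 0 ≤ c₀)
    (hPbd : ∀ t ∈ Icc 0 T, |P t| ≤ M) (hKbd : ∀ t ∈ Icc 0 T, |K t| ≤ M)
    (hφbd : ∀ t ∈ Icc 0 T, |φ t| ≤ M) (hαbd : ∀ t ∈ Icc 0 T, ε ≤ |R t + P t * D t ^ 2|) :
    ∃ L, 0 ≤ L ∧ ∀ n : ℕ, ∀ t ∈ Icc 0 T, ∀ p k x : ℝ, |p| ≤ M → |k| ≤ M → |x| ≤ M →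
      ε ≤ |R t + (p + k / n) * D t ^ 2| → |p - P t| ≤ c₀ / n → |k - K t| ≤ c₀ / n →
      |offsetDrift (A t) (B t) (C t) (D t) (f t) (g t) (Q t) (R t) (Γ t) (η t) p k (1 / n) x
        - offsetDrift (A t) (B t) (C t) (D t) (f t) (g t) (Q t) (R t) (Γ t) (η t)
          (P t) (K t) 0 (φ t)|
        ≤ L * (|x - φ t| + 1 / n) := by
  -- A point `(n, t, p, k, x)` of `S` stands for `(N, t, P_N t, K_N t, φ_N t)`; working along
  -- `𝓟 S` makes the `O(ρ)` constants uniform in all of them.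
  let S : Set (ℕ × ℝ × ℝ × ℝ × ℝ) := {(n, t, p, k, x) | |p| ≤ M ∧ |k| ≤ M ∧ |x| ≤ M ∧
    t ∈ Icc 0 T ∧ ε ≤ |R t + (p + k / n) * D t ^ 2| ∧ |p - P t| ≤ c₀ / n ∧ |k - K t| ≤ c₀ / n}
  let ρ : ℕ × ℝ × ℝ × ℝ × ℝ → ℝ := fun (n, t, _, _, x) => |x - φ t| + 1 / n
  have hρ : ∀ i, ‖i.2.2.2.2 - φ i.2.1‖ ≤ ‖ρ i‖ ∧ ∀ a : ℝ, 0 ≤ a → a / i.1 ≤ a * ‖ρ i‖ := by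
    rintro ⟨n, t, p, k, x⟩
    have hρ₀ : 0 ≤ |x - φ t| + 1 / (n : ℝ) := by positivity
    dsimp only [ρ]
    refine ⟨?_, fun a ha => ?_⟩ <;> rw [Real.norm_of_nonneg hρ₀]
    · exact le_add_of_nonneg_right (by positivity)
    · rw [div_eq_mul_one_div]
      exact mul_le_mul_of_nonneg_left (le_add_of_nonneg_left (abs_nonneg _)) ha
  have hτ : MapsTo (fun i => i.2.1) S (Icc 0 T) := fun i hi => hi.2.2.2.1
  have hcoef {F : ℝ → ℝ} (hF : ContinuousOn F (Icc 0 T)) :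
      IsBoundedPerturbation (𝓟 S) ρ (fun i => F i.2.1) (fun i => F i.2.1) :=
    hF.isBoundedPerturbation_comp isCompact_Icc hτ
  have hdrift := IsBoundedPerturbation.offsetDrift (hcoef hA) (hcoef hB) (hcoef hC) (hcoef hD)
    (hcoef hf) (hcoef hg) (hcoef hQ) (hcoef hR) (hcoef hΓ) (hcoef hη)
    (p := fun i => P i.2.1) (p' := fun i => i.2.2.1)
      (.of_norm_le (fun i hi => hPbd _ (hτ hi)) (fun i hi => hi.1)
        fun i hi => hi.2.2.2.2.2.1.trans ((hρ i).2 c₀ hc₀))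
    (k := fun i => K i.2.1) (k' := fun i => i.2.2.2.1)
      (.of_norm_le (fun i hi => hKbd _ (hτ hi)) (fun i hi => hi.2.1)
        fun i hi => hi.2.2.2.2.2.2.trans ((hρ i).2 c₀ hc₀))
    (ν := fun _ => 0) (ν' := fun i => 1 / i.1)
      (.of_norm_le (U := 0) (V := 1) (C := 1) (by simp)
        (fun i _ => by simpa using Nat.cast_inv_le_one (α := ℝ) i.1)
        (fun i _ => by simpa using (hρ i).2 1 zero_le_one))
    (x := fun i => φ i.2.1) (x' := fun i => i.2.2.2.2)
      (.of_norm_le (C := 1) (fun i hi => hφbd _ (hτ hi)) (fun i hi => hi.2.2.1)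
        fun i _ => (one_mul ‖ρ i‖).symm ▸ (hρ i).1)
    (one_isBigO_principal_of_le hε fun i hi => by simpa using hαbd _ (hτ hi))
    (one_isBigO_principal_of_le hε fun i hi => by
      simpa only [mul_one_div, Real.norm_eq_abs] using hi.2.2.2.2.1)
  obtain ⟨L, hL0, hL⟩ := hdrift.sub_isBigO.exists_nonneg
  refine ⟨L, hL0, fun n t ht p k x hp hk hx hα hdp hdk => ?_⟩
  have hρ₀ : 0 ≤ |x - φ t| + 1 / n := by positivity
  simpa only [ρ, Real.norm_eq_abs, abs_of_nonneg hρ₀] using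
    isBigOWith_principal.1 hL (n, t, p, k, x) ⟨hp, hk, hx, ht, hα, hdp, hdk⟩

theorem stmt_16_general (T : ℝ) (hT : 0 < T)
    (A B C D f g Q R Γ η : ℝ → ℝ)
    (hA : ContinuousOn A (Icc 0 T)) (hB : ContinuousOn B (Icc 0 T))
    (hC : ContinuousOn C (Icc 0 T)) (hD : ContinuousOn D (Icc 0 T))
    (hf : ContinuousOn f (Icc 0 T)) (hg : ContinuousOn g (Icc 0 T))
    (hQ : ContinuousOn Q (Icc 0 T)) (hR : ContinuousOn R (Icc 0 T))
    (hΓ : ContinuousOn Γ (Icc 0 T)) (hη : ContinuousOn η (Icc 0 T))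
    (H Γ₀ η₀ : ℝ) (ε : ℝ) (hε : 0 < ε) (M : ℝ) (c₀ : ℝ) (hc₀ : 0 ≤ c₀)
    (P K φ : ℝ → ℝ)
    (hPbd : ∀ t ∈ Icc (0 : ℝ) T, |P t| ≤ M)
    (hKbd : ∀ t ∈ Icc (0 : ℝ) T, |K t| ≤ M)
    (hφbd : ∀ t ∈ Icc (0 : ℝ) T, |φ t| ≤ M)
    (hαbd : ∀ t ∈ Icc (0 : ℝ) T, ε ≤ |R t + P t * D t ^ 2|)
    (hφT : φ T = -H * η₀)
    (hφode : ∀ t ∈ Icc (0 : ℝ) T,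
      HasDerivAt φ
        (-(f t * P t + f t * K t + A t * φ t + C t * P t * g t
          - K t * B t * (R t + P t * D t ^ 2)⁻¹
              * (B t * φ t + P t * g t * D t)
          - (B t * P t + P t * C t * D t) * (R t + P t * D t ^ 2)⁻¹
              * (B t * φ t + P t * g t * D t)
          - Q t * η t)) t) :
    ∃ c : ℝ, 0 ≤ c ∧
      ∀ N : ℕ, 1 ≤ N → ∀ PN KN φN : ℝ → ℝ,
        (∀ t ∈ Icc (0 : ℝ) T, DifferentiableAt ℝ PN t) →
        (∀ t ∈ Icc (0 : ℝ) T, DifferentiableAt ℝ KN t) →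
        (∀ t ∈ Icc (0 : ℝ) T, |PN t| ≤ M) →
        (∀ t ∈ Icc (0 : ℝ) T, |KN t| ≤ M) →
        (∀ t ∈ Icc (0 : ℝ) T, |φN t| ≤ M) →
        (∀ t ∈ Icc (0 : ℝ) T, ε ≤ |R t + (PN t + KN t / (N : ℝ)) * D t ^ 2|) →
        φN T = -H * (1 - Γ₀ / (N : ℝ)) * η₀ →
        (∀ t ∈ Icc (0 : ℝ) T, |PN t - P t| ≤ c₀ / N) →
        (∀ t ∈ Icc (0 : ℝ) T, |KN t - K t| ≤ c₀ / N) →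
        (∀ t ∈ Icc (0 : ℝ) T,
          HasDerivAt φN
            (-(f t * PN t + f t * KN t + A t * φN t
              - PN t * B t * (R t + (PN t + KN t / (N : ℝ)) * D t ^ 2)⁻¹
                  * (B t * φN t + (PN t + KN t / (N : ℝ)) * g t * D t)
              - KN t * B t * (R t + (PN t + KN t / (N : ℝ)) * D t ^ 2)⁻¹
                  * (B t * φN t + (PN t + KN t / (N : ℝ)) * g t * D t)
              + C t * (PN t + KN t / (N : ℝ))
                  * (g t - D t * (R t + (PN t + KN t / (N : ℝ)) * D t ^ 2)⁻¹
                      * (B t * φN t + (PN t + KN t / (N : ℝ)) * g t * D t))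
              - (1 - Γ t / (N : ℝ)) * Q t * η t)) t) →
        ∀ t ∈ Icc (0 : ℝ) T, |φN t - φ t| ≤ c / N := by
  obtain ⟨L, hL0, hL⟩ := exists_abs_offsetDrift_sub_le hA hB hC hD hf hg hQ hR hΓ hη hε hc₀
    hPbd hKbd hφbd hαbd
  have hmono := gronwallBound_mono (abs_nonneg (H * Γ₀ * η₀)) hL0 hL0
  refine ⟨gronwallBound |H * Γ₀ * η₀| L L T,
    (abs_nonneg _).trans ((gronwallBound_x0 _ _ _).symm.le.trans (hmono hT.le)), ?_⟩
  rintro N hN PN KN φN - - hPNb hKNb hφNb hαN hφNT hPN hKN hφN t ht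
  have hN₀ : (0 : ℝ) < N := by exact_mod_cast hN
  have hdiff : ∀ s ∈ Icc 0 T, HasDerivAt (fun s => φN s - φ s)
      (offsetDrift (A s) (B s) (C s) (D s) (f s) (g s) (Q s) (R s) (Γ s) (η s) (P s) (K s) 0 (φ s)
        - offsetDrift (A s) (B s) (C s) (D s) (f s) (g s) (Q s) (R s) (Γ s) (η s)
          (PN s) (KN s) (1 / N) (φN s)) s := fun s hs =>
    ((hφN s hs).sub (hφode s hs)).congr_deriv (by unfold offsetDrift; ring)
  have hterm : ‖φN T - φ T‖ ≤ |H * Γ₀ * η₀| / N := by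
    rw [hφNT, hφT, Real.norm_eq_abs,
      show -H * (1 - Γ₀ / N) * η₀ - -H * η₀ = H * Γ₀ * η₀ / N by field_simp; ring,
      abs_div, Nat.abs_cast]
  calc |φN t - φ t| ≤ gronwallBound (|H * Γ₀ * η₀| / N) L (L / N) (T - t) := by
        refine norm_le_gronwallBound_backward hdiff hterm (fun s hs => ?_) t ht
        rw [norm_sub_rev, Real.norm_eq_abs, Real.norm_eq_abs]
        exact (hL N s hs _ _ _ (hPNb s hs) (hKNb s hs) (hφNb s hs) (hαN s hs) (hPN s hs)
          (hKN s hs)).trans_eq (by ring)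
    _ = gronwallBound |H * Γ₀ * η₀| L L (T - t) / N := gronwallBound_div _ _ _ _ _
    _ ≤ gronwallBound |H * Γ₀ * η₀| L L T / N := by gcongr; exact hmono (by linarith [ht.1])

/-- Continuous dependence on `1/N` for the offset function: given that `P_N` and `K_N`
are within `c₀/N` of `P` and `K` in supremum norm and `|α_N|, |α| ≥ ε`, the solution
`φ_N` of the `N`-dependent linear backward ODE is within `O(1/N)` of the solution `φ`
of the limiting linear backward ODE in supremum norm on `[0,T]`. -/
theorem stmt_16 (T : ℝ) (hT : 0 < T)
    (A B C D f g Q R Γ η : ℝ → ℝ)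
    (hA : ContinuousOn A (Icc 0 T)) (hB : ContinuousOn B (Icc 0 T))
    (hC : ContinuousOn C (Icc 0 T)) (hD : ContinuousOn D (Icc 0 T))
    (hf : ContinuousOn f (Icc 0 T)) (hg : ContinuousOn g (Icc 0 T))
    (hQ : ContinuousOn Q (Icc 0 T)) (hR : ContinuousOn R (Icc 0 T))
    (hΓ : ContinuousOn Γ (Icc 0 T)) (hη : ContinuousOn η (Icc 0 T))
    (H Γ₀ η₀ : ℝ) (ε : ℝ) (hε : 0 < ε) (M : ℝ) (hM : 0 ≤ M) (c₀ : ℝ) (hc₀ : 0 ≤ c₀)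
    (P K φ : ℝ → ℝ)
    (hPdiff : ∀ t ∈ Icc (0 : ℝ) T, DifferentiableAt ℝ P t)
    (hKdiff : ∀ t ∈ Icc (0 : ℝ) T, DifferentiableAt ℝ K t)
    (hPbd : ∀ t ∈ Icc (0 : ℝ) T, |P t| ≤ M)
    (hKbd : ∀ t ∈ Icc (0 : ℝ) T, |K t| ≤ M)
    (hφbd : ∀ t ∈ Icc (0 : ℝ) T, |φ t| ≤ M)
    (hαbd : ∀ t ∈ Icc (0 : ℝ) T, ε ≤ |R t + P t * D t ^ 2|)
    (hφT : φ T = -H * η₀)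
    (hφode : ∀ t ∈ Icc (0 : ℝ) T,
      HasDerivAt φ
        (-(f t * P t + f t * K t + A t * φ t + C t * P t * g t
          - K t * B t * (R t + P t * D t ^ 2)⁻¹
              * (B t * φ t + P t * g t * D t)
          - (B t * P t + P t * C t * D t) * (R t + P t * D t ^ 2)⁻¹
              * (B t * φ t + P t * g t * D t)
          - Q t * η t)) t) :
    ∃ c : ℝ, 0 ≤ c ∧
      ∀ N : ℕ, 1 ≤ N → ∀ PN KN φN : ℝ → ℝ,
        (∀ t ∈ Icc (0 : ℝ) T, DifferentiableAt ℝ PN t) →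
        (∀ t ∈ Icc (0 : ℝ) T, DifferentiableAt ℝ KN t) →
        (∀ t ∈ Icc (0 : ℝ) T, |PN t| ≤ M) →
        (∀ t ∈ Icc (0 : ℝ) T, |KN t| ≤ M) →
        (∀ t ∈ Icc (0 : ℝ) T, |φN t| ≤ M) →
        (∀ t ∈ Icc (0 : ℝ) T, ε ≤ |R t + (PN t + KN t / (N : ℝ)) * D t ^ 2|) →
        φN T = -H * (1 - Γ₀ / (N : ℝ)) * η₀ →
        (∀ t ∈ Icc (0 : ℝ) T, |PN t - P t| ≤ c₀ / N) →
        (∀ t ∈ Icc (0 : ℝ) T, |KN t - K t| ≤ c₀ / N) →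
        (∀ t ∈ Icc (0 : ℝ) T,
          HasDerivAt φN
            (-(f t * PN t + f t * KN t + A t * φN t
              - PN t * B t * (R t + (PN t + KN t / (N : ℝ)) * D t ^ 2)⁻¹
                  * (B t * φN t + (PN t + KN t / (N : ℝ)) * g t * D t)
              - KN t * B t * (R t + (PN t + KN t / (N : ℝ)) * D t ^ 2)⁻¹
                  * (B t * φN t + (PN t + KN t / (N : ℝ)) * g t * D t)
              + C t * (PN t + KN t / (N : ℝ))
                  * (g t - D t * (R t + (PN t + KN t / (N : ℝ)) * D t ^ 2)⁻¹
                      * (B t * φN t + (PN t + KN t / (N : ℝ)) * g t * D t))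
              - (1 - Γ t / (N : ℝ)) * Q t * η t)) t) →
        ∀ t ∈ Icc (0 : ℝ) T, |φN t - φ t| ≤ c / N :=
  stmt_16_general T hT A B C D f g Q R Γ η hA hB hC hD hf hg hQ hR hΓ hη H Γ₀ η₀ ε hε M c₀ hc₀ P K φ
    hPbd hKbd hφbd hαbd hφT hφode
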